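/- arXiv:2201.13413 — 2 statements merged into one kernel-verified Lean document; each statement's English description precedes it below -/
import Mathlib

section
/- Let F, H : [0,M] → [0,∞) be increasing with H(u) = ∫₀ᵘ h(s) ds for a continuous positive function h on (0,M) integrable at 0, let P be positive continuous on (0,M) with F = hP, and suppose there exist λ ∈ (0,2) and C₂ > 0 such that (√(sF(s)))^λ ≤ C₂ H(s) for all s ∈ [0,M]. Then for all s ∈ (0,M], H(s) ≥ ( H(M)^{−Λ} + Λ C₂^{1+Λ} ∫ₛᴹ dτ/(τ P(τ)) )^{−1/Λ}, where Λ = 2/λ − 1 > 0. -/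
open Set Real MeasureTheory intervalIntegral

/-! With `G = H ^ (-Λ)` one has `-G' = Λ h / H ^ (1 + Λ)`. The structural condition, raised to
the power `2 / λ = 1 + Λ`, gives `h τ · τ P τ = τ F τ ≤ (C₂ H τ) ^ (1 + Λ)`, i.e.
`-G' ≤ Λ C₂ ^ (1 + Λ) / (τ P τ)`. Integrating over `[s, M]` bounds `H s ^ (-Λ)` by the bracket of
the statement, and raising to the power `-1 / Λ` reverses the inequality. -/

section Primitive

variable {h H : ℝ → ℝ} {a b : ℝ}

theorem continuousOn_of_eq_primitive (hab : a ≤ b) (hh : IntervalIntegrable h volume a b)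
    (hH : ∀ u ∈ Icc a b, H u = ∫ t in a..u, h t) : ContinuousOn H (Icc a b) := by
  have hprim := continuousOn_primitive_interval' hh left_mem_uIcc
  rw [uIcc_of_le hab] at hprim
  exact hprim.congr hH

theorem IntervalIntegrable.mono_right_of_mem_Icc (hh : IntervalIntegrable h volume a b) {u : ℝ}
    (hu : u ∈ Icc a b) : IntervalIntegrable h volume a u :=
  hh.mono_set (uIcc_subset_uIcc left_mem_uIcc (Icc_subset_uIcc hu))

theorem hasDerivAt_of_eq_primitive (hh : IntervalIntegrable h volume a b)
    (hc : ContinuousOn h (Ioo a b)) (hH : ∀ u ∈ Icc a b, H u = ∫ t in a..u, h t)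
    {x : ℝ} (hx : x ∈ Ioo a b) : HasDerivAt H (h x) x := by
  have hd : HasDerivAt (fun u => ∫ t in a..u, h t) (h x) x :=
    integral_hasDerivAt_right (hh.mono_right_of_mem_Icc (Ioo_subset_Icc_self hx))
      (hc.stronglyMeasurableAtFilter isOpen_Ioo x hx) (hc.continuousAt (isOpen_Ioo.mem_nhds hx))
  refine hd.congr_of_eventuallyEq ?_
  filter_upwards [isOpen_Ioo.mem_nhds hx] with u hu
  exact hH u (Ioo_subset_Icc_self hu)

theorem pos_of_eq_primitive (hh : IntervalIntegrable h volume a b)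
    (hpos : ∀ x ∈ Ioo a b, 0 < h x) (hH : ∀ u ∈ Icc a b, H u = ∫ t in a..u, h t)
    {u : ℝ} (hu : u ∈ Ioc a b) : 0 < H u := by
  rw [hH u (Ioc_subset_Icc_self hu)]
  exact intervalIntegral_pos_of_pos_on (hh.mono_right_of_mem_Icc (Ioc_subset_Icc_self hu))
    (fun x hx => hpos x ⟨hx.1, hx.2.trans_le hu.2⟩) hu.1

end Primitive

theorem le_rpow_two_div_of_sqrt_rpow_le {x y lam : ℝ} (hx : 0 ≤ x) (hlam : 0 < lam)
    (h : √x ^ lam ≤ y) : x ≤ y ^ (2 / lam) := by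
  have hpow := rpow_le_rpow (by positivity) h (by positivity : 0 ≤ 2 / lam)
  rwa [← rpow_mul (sqrt_nonneg x), mul_div_cancel₀ _ hlam.ne', sqrt_eq_rpow, ← rpow_mul hx,
    one_div_mul_cancel two_ne_zero, rpow_one] at hpow

theorem le_mul_rpow_of_sqrt_mul_rpow_le {t v p C y lam : ℝ} (htp : 0 < t * p) (hv : 0 ≤ v)
    (hC : 0 ≤ C) (hy : 0 ≤ y) (hlam : 0 < lam) (h : √(t * (v * p)) ^ lam ≤ C * y) :
    v ≤ C ^ (2 / lam) * (1 / (t * p)) * y ^ (2 / lam) := by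
  have hle := le_rpow_two_div_of_sqrt_rpow_le (by rw [mul_left_comm]; positivity) hlam h
  rw [mul_rpow hC hy] at hle
  rw [mul_one_div, div_mul_eq_mul_div, le_div_iff₀ htp]
  linarith

theorem rpow_neg_le_add_integral_of_deriv_le_mul_rpow {H h q : ℝ → ℝ} {a b Λ : ℝ}
    (hab : a ≤ b) (hΛ : 0 ≤ Λ) (hHc : ContinuousOn H (Icc a b))
    (hHpos : ∀ x ∈ Icc a b, 0 < H x) (hH' : ∀ x ∈ Ioo a b, HasDerivAt H (h x) x)
    (hq : IntervalIntegrable q volume a b) (hle : ∀ x ∈ Ioo a b, h x ≤ q x * H x ^ (1 + Λ)) :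
    H a ^ (-Λ) ≤ H b ^ (-Λ) + Λ * ∫ x in a..b, q x := by
  have hderiv : ∀ x ∈ Ioo a b, HasDerivWithinAt (fun u => -H u ^ (-Λ))
      (Λ * h x / H x ^ (1 + Λ)) (Ioi x) x := by
    intro x hx
    have hHx := hHpos x (Ioo_subset_Icc_self hx)
    refine (((hasDerivAt_rpow_const (Or.inl hHx.ne')).comp x (hH' x hx)).neg.congr_deriv ?_
      ).hasDerivWithinAt
    rw [show -Λ - 1 = -(1 + Λ) by ring, rpow_neg hHx.le]
    field_simp
  have hbound : ∀ x ∈ Ioo a b, Λ * h x / H x ^ (1 + Λ) ≤ Λ * q x := by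
    intro x hx
    have hHx := rpow_pos_of_pos (hHpos x (Ioo_subset_Icc_self hx)) (1 + Λ)
    rw [mul_div_assoc]
    exact mul_le_mul_of_nonneg_left ((div_le_iff₀ hHx).mpr (hle x hx)) hΛ
  have hint := sub_le_integral_of_hasDeriv_right_of_le (g := fun u => -H u ^ (-Λ)) hab
    (hHc.rpow_const (fun x hx => Or.inl (hHpos x hx).ne')).neg hderiv
    ((intervalIntegrable_iff_integrableOn_Icc_of_le hab).mp (hq.const_mul Λ)) hbound
  simp only [intervalIntegral.integral_const_mul] at hint
  linarith

theorem le_of_rpow_neg_le {x y Λ : ℝ} (hx : 0 < x) (hΛ : 0 < Λ) (h : x ^ (-Λ) ≤ y) :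
    y ^ (-(1 / Λ)) ≤ x := by
  have hinv := rpow_le_rpow_of_nonpos (rpow_pos_of_pos hx _) h
    (neg_nonpos.mpr (one_div_pos.mpr hΛ).le)
  rwa [← rpow_mul hx.le, neg_mul_neg, mul_one_div_cancel hΛ.ne', rpow_one] at hinv

theorem H_lower_bound_general
    (M lam Lam C₂ : ℝ) (hlam : lam ∈ Ioo (0 : ℝ) 2)
    (hLam : Lam = 2 / lam - 1) (hC₂ : 0 < C₂)
    (h H P F : ℝ → ℝ)
    (hhcont : ContinuousOn h (Ioo 0 M)) (hhpos : ∀ s ∈ Ioo 0 M, 0 < h s)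
    (hhint : IntervalIntegrable h volume 0 M)
    (hHdef : ∀ u ∈ Icc 0 M, H u = ∫ s in (0 : ℝ)..u, h s)
    (hPcont : ContinuousOn P (Icc 0 M)) (hPpos : ∀ s ∈ Ioc 0 M, 0 < P s)
    (hFdef : ∀ s ∈ Icc 0 M, F s = h s * P s)
    (hstruct : ∀ s ∈ Icc 0 M, Real.sqrt (s * F s) ^ lam ≤ C₂ * H s) :
    ∀ s ∈ Ioc 0 M,
      H s ≥ (H M ^ (-Lam) + Lam * C₂ ^ (1 + Lam) *
        ∫ τ in s..M, 1 / (τ * P τ)) ^ (-(1 / Lam)) := by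
  rintro s ⟨hs0, hsM⟩
  obtain ⟨hlam0, hlam2⟩ := hlam
  have hLam0 : 0 < Lam := by rw [hLam]; linarith [(one_lt_div hlam0).2 hlam2]
  have hexp : 2 / lam = 1 + Lam := by rw [hLam]; ring
  have hsub : Icc s M ⊆ Icc 0 M := Icc_subset_Icc_left hs0.le
  have hτP : ∀ τ ∈ Icc s M, 0 < τ * P τ := fun τ hτ =>
    mul_pos (hs0.trans_le hτ.1) (hPpos τ ⟨hs0.trans_le hτ.1, hτ.2⟩)
  have hHpos : ∀ τ ∈ Icc s M, 0 < H τ := fun τ hτ =>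
    pos_of_eq_primitive hhint hhpos hHdef ⟨hs0.trans_le hτ.1, hτ.2⟩
  have hkey : ∀ τ ∈ Ioo s M, h τ ≤ C₂ ^ (1 + Lam) * (1 / (τ * P τ)) * H τ ^ (1 + Lam) := by
    intro τ hτ
    have hτI : τ ∈ Icc 0 M := hsub (Ioo_subset_Icc_self hτ)
    rw [← hexp]
    refine le_mul_rpow_of_sqrt_mul_rpow_le (hτP τ (Ioo_subset_Icc_self hτ))
      (hhpos τ ⟨hs0.trans hτ.1, hτ.2⟩).le hC₂.le (hHpos τ (Ioo_subset_Icc_self hτ)).le hlam0 ?_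
    rw [← hFdef τ hτI]
    exact hstruct τ hτI
  have hq : IntervalIntegrable (fun τ => C₂ ^ (1 + Lam) * (1 / (τ * P τ))) volume s M :=
    ContinuousOn.intervalIntegrable_of_Icc hsM <| continuousOn_const.mul <|
      continuousOn_const.div (continuousOn_id.mul (hPcont.mono hsub)) fun τ hτ => (hτP τ hτ).ne'
  have hcmp := rpow_neg_le_add_integral_of_deriv_le_mul_rpow hsM hLam0.le
    ((continuousOn_of_eq_primitive (hs0.le.trans hsM) hhint hHdef).mono hsub) hHpos
    (fun τ hτ => hasDerivAt_of_eq_primitive hhint hhcont hHdef ⟨hs0.trans hτ.1, hτ.2⟩) hq hkey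
  rw [intervalIntegral.integral_const_mul, ← mul_assoc] at hcmp
  exact le_of_rpow_neg_le (hHpos s ⟨le_rfl, hsM⟩) hLam0 hcmp

/-- Lower bound for `H` (Proposition 5.1): if `H u = ∫₀ᵘ h`, `F = h·P`, and
`(√(s F s))^λ ≤ C₂ H s` on `[0,M]` with `λ ∈ (0,2)`, then for `s ∈ (0,M]`,
`H s ≥ (H M ^ (−Λ) + Λ C₂^(1+Λ) ∫ₛᴹ dτ/(τ P τ))^(−1/Λ)` where `Λ = 2/λ − 1`. -/
theorem H_lower_bound
    (M lam Lam C₂ : ℝ) (hM : 0 < M) (hlam : lam ∈ Ioo (0 : ℝ) 2)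
    (hLam : Lam = 2 / lam - 1) (hC₂ : 0 < C₂)
    (h H P F : ℝ → ℝ)
    (hhcont : ContinuousOn h (Ioo 0 M)) (hhpos : ∀ s ∈ Ioo 0 M, 0 < h s)
    (hhint : IntervalIntegrable h volume 0 M)
    (hHdef : ∀ u ∈ Icc 0 M, H u = ∫ s in (0 : ℝ)..u, h s)
    (hPcont : ContinuousOn P (Icc 0 M)) (hPpos : ∀ s ∈ Ioc 0 M, 0 < P s)
    (hFdef : ∀ s ∈ Icc 0 M, F s = h s * P s)
    (hstruct : ∀ s ∈ Icc 0 M, Real.sqrt (s * F s) ^ lam ≤ C₂ * H s) :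
    ∀ s ∈ Ioc 0 M,
      H s ≥ (H M ^ (-Lam) + Lam * C₂ ^ (1 + Lam) *
        ∫ τ in s..M, 1 / (τ * P τ)) ^ (-(1 / Lam)) :=
  H_lower_bound_general M lam Lam C₂ hlam hLam hC₂ h H P F hhcont hhpos hhint hHdef hPcont hPpos
    hFdef hstruct
end

section
/- Let ζ : (0,1] → ℝ be continuous with 0 < k₁ ≤ ζ(s) ≤ k₂, and set P(s) = exp(−∫ₛ¹ ζ(τ)/τ dτ), I(s) = ∫ₛ¹ t^{−1} exp(∫ₜ¹ ζ(τ)/τ dτ) dt. If ζ(s) → L as s → 0 for some L > 0, then P(s)·I(s) → 1/L as s → 0. In particular, P·I is bounded above by a constant depending only on k₁ near 0. -/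
/-!
Splitting `∫ₛ¹ = ∫ₛᵗ + ∫ₜ¹` gives `P(s) I(s) = ∫ₛ¹ t⁻¹ exp (-∫ₛᵗ ζ(τ)/τ dτ) dt`.
Where `c ≤ ζ ≤ C` on `[s, t]`, the inner exponential lies between `(s/t)^C` and `(s/t)^c`,
and `∫ₐᵇ t⁻¹ (s/t)^c dt = ((s/a)^c - (s/b)^c)/c`. Choosing `δ` so that `ζ` is within `ε` of `L`
on `(0, δ]`, the integral over `[s, δ]` is squeezed between `(1 - (s/δ)^(L+ε))/(L+ε)` and
`1/(L-ε)`, while `ζ ≥ k₁` bounds the integral over `[δ, 1]` by `(s/δ)^k₁/k₁ → 0`.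
The eventual bound follows from `1/L ≤ 1/k₁`.
-/

open Set Real Filter intervalIntegral MeasureTheory Topology

noncomputable def decayIntegral (f : ℝ → ℝ) (s : ℝ) : ℝ :=
  ∫ t in s..1, 1 / t * exp (-∫ τ in s..t, f τ / τ)

section LogIntegral

variable {f : ℝ → ℝ} {a b c s t : ℝ}

lemma intervalIntegrable_div_self (hf : ContinuousOn f (Icc a b)) (ha : 0 < a) (hab : a ≤ b) :
    IntervalIntegrable (fun τ => f τ / τ) volume a b :=
  (hf.div continuousOn_id fun _ hτ => (ha.trans_le hτ.1).ne').intervalIntegrable_of_Icc hab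

lemma integral_const_div_self (hs : 0 < s) (ht : 0 < t) :
    ∫ τ in s..t, c / τ = c * log (t / s) := by
  simp_rw [div_eq_mul_inv c]
  rw [intervalIntegral.integral_const_mul, integral_inv_of_pos hs ht]

lemma div_rpow_eq_exp_neg_integral_const_div_self (hs : 0 < s) (ht : 0 < t) :
    (s / t) ^ c = exp (-∫ τ in s..t, c / τ) := by
  rw [integral_const_div_self hs ht, rpow_def_of_pos (div_pos hs ht), ← inv_div, log_inv]
  ring_nf

lemma exp_neg_integral_div_self_le_rpow (hf : ContinuousOn f (Icc s t)) (hs : 0 < s)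
    (hst : s ≤ t) (hfc : ∀ τ ∈ Icc s t, c ≤ f τ) :
    exp (-∫ τ in s..t, f τ / τ) ≤ (s / t) ^ c := by
  rw [div_rpow_eq_exp_neg_integral_const_div_self hs (hs.trans_le hst), exp_le_exp, neg_le_neg_iff]
  exact integral_mono_on hst (intervalIntegrable_div_self continuousOn_const hs hst)
    (intervalIntegrable_div_self hf hs hst)
    fun τ hτ => div_le_div_of_nonneg_right (hfc τ hτ) (hs.trans_le hτ.1).le

lemma rpow_le_exp_neg_integral_div_self (hf : ContinuousOn f (Icc s t)) (hs : 0 < s)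
    (hst : s ≤ t) (hfc : ∀ τ ∈ Icc s t, f τ ≤ c) :
    (s / t) ^ c ≤ exp (-∫ τ in s..t, f τ / τ) := by
  rw [div_rpow_eq_exp_neg_integral_const_div_self hs (hs.trans_le hst), exp_le_exp, neg_le_neg_iff]
  exact integral_mono_on hst (intervalIntegrable_div_self hf hs hst)
    (intervalIntegrable_div_self continuousOn_const hs hst)
    fun τ hτ => div_le_div_of_nonneg_right (hfc τ hτ) (hs.trans_le hτ.1).le

end LogIntegral

section PowerIntegral

variable {a b c s : ℝ}

lemma intervalIntegrable_one_div_mul_div_rpow (hs : 0 < s) (ha : 0 < a) (hab : a ≤ b) :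
    IntervalIntegrable (fun t => 1 / t * (s / t) ^ c) volume a b := by
  refine ContinuousOn.intervalIntegrable_of_Icc hab ?_
  have hne : ∀ t ∈ Icc a b, t ≠ 0 := fun t ht => (ha.trans_le ht.1).ne'
  exact (continuousOn_const.div continuousOn_id hne).mul
    ((continuousOn_const.div continuousOn_id hne).rpow_const
      fun t ht => Or.inl (div_ne_zero hs.ne' (hne t ht)))

lemma integral_one_div_mul_div_rpow (hs : 0 ≤ s) (ha : 0 < a) (hab : a ≤ b) (hc : c ≠ 0) :
    ∫ t in a..b, 1 / t * (s / t) ^ c = ((s / a) ^ c - (s / b) ^ c) / c := by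
  have hb : 0 < b := ha.trans_le hab
  have hpow : ∀ t ∈ uIcc a b, 1 / t * (s / t) ^ c = s ^ c * t ^ (-c - 1) := by
    intro t ht
    have ht0 : 0 < t := ha.trans_le (uIcc_of_le hab ▸ ht).1
    rw [div_rpow hs ht0.le, rpow_sub ht0, rpow_one, rpow_neg ht0.le]
    field_simp
  have h0 : (0 : ℝ) ∉ uIcc a b := by
    rw [uIcc_of_le hab]; exact fun h => ha.not_ge h.1
  rw [integral_congr hpow, intervalIntegral.integral_const_mul,
    integral_rpow (Or.inr ⟨by contrapose! hc; linarith, h0⟩), sub_add_cancel,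
    div_rpow hs ha.le, div_rpow hs hb.le, rpow_neg ha.le, rpow_neg hb.le]
  field_simp
  ring

end PowerIntegral
section DecayIntegral

variable {f : ℝ → ℝ} {a b c s : ℝ}

lemma continuousOn_one_div_mul_exp_neg_integral (hf : ContinuousOn f (Icc s b)) (hs : 0 < s)
    (hsb : s ≤ b) :
    ContinuousOn (fun t => 1 / t * exp (-∫ τ in s..t, f τ / τ)) (Icc s b) := by
  have hprim : ContinuousOn (fun t => ∫ τ in s..t, f τ / τ) (Icc s b) := by
    simpa only [uIcc_of_le hsb] using continuousOn_primitive_interval'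
      (intervalIntegrable_div_self hf hs hsb) left_mem_uIcc
  exact (continuousOn_const.div continuousOn_id fun t ht => (hs.trans_le ht.1).ne').mul
    (continuous_exp.comp_continuousOn hprim.neg)

lemma intervalIntegrable_one_div_mul_exp_neg_integral (hf : ContinuousOn f (Icc s b))
    (hs : 0 < s) (hsa : s ≤ a) (hab : a ≤ b) :
    IntervalIntegrable (fun t => 1 / t * exp (-∫ τ in s..t, f τ / τ)) volume a b :=
  ((continuousOn_one_div_mul_exp_neg_integral hf hs (hsa.trans hab)).mono
    (Icc_subset_Icc_left hsa)).intervalIntegrable_of_Icc hab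

lemma integral_one_div_mul_exp_neg_integral_le (hf : ContinuousOn f (Icc s b)) (hs : 0 < s)
    (hsa : s ≤ a) (hab : a ≤ b) (hc : c ≠ 0) (hfc : ∀ τ ∈ Icc s b, c ≤ f τ) :
    ∫ t in a..b, 1 / t * exp (-∫ τ in s..t, f τ / τ) ≤ ((s / a) ^ c - (s / b) ^ c) / c := by
  have ha : 0 < a := hs.trans_le hsa
  rw [← integral_one_div_mul_div_rpow hs.le ha hab hc]
  refine integral_mono_on hab (intervalIntegrable_one_div_mul_exp_neg_integral hf hs hsa hab)
    (intervalIntegrable_one_div_mul_div_rpow hs ha hab) fun t ht => ?_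
  have hst : Icc s t ⊆ Icc s b := Icc_subset_Icc_right ht.2
  gcongr
  · exact one_div_nonneg.2 (ha.trans_le ht.1).le
  · exact exp_neg_integral_div_self_le_rpow (hf.mono hst) hs (hsa.trans ht.1)
      fun τ hτ => hfc τ (hst hτ)

lemma le_integral_one_div_mul_exp_neg_integral (hf : ContinuousOn f (Icc s b)) (hs : 0 < s)
    (hsa : s ≤ a) (hab : a ≤ b) (hc : c ≠ 0) (hfc : ∀ τ ∈ Icc s b, f τ ≤ c) :
    ((s / a) ^ c - (s / b) ^ c) / c ≤ ∫ t in a..b, 1 / t * exp (-∫ τ in s..t, f τ / τ) := by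
  have ha : 0 < a := hs.trans_le hsa
  rw [← integral_one_div_mul_div_rpow hs.le ha hab hc]
  refine integral_mono_on hab (intervalIntegrable_one_div_mul_div_rpow hs ha hab)
    (intervalIntegrable_one_div_mul_exp_neg_integral hf hs hsa hab) fun t ht => ?_
  have hst : Icc s t ⊆ Icc s b := Icc_subset_Icc_right ht.2
  gcongr
  · exact one_div_nonneg.2 (ha.trans_le ht.1).le
  · exact rpow_le_exp_neg_integral_div_self (hf.mono hst) hs (hsa.trans ht.1)
      fun τ hτ => hfc τ (hst hτ)

end DecayIntegral
section Bounds

variable {f : ℝ → ℝ} {c k s δ : ℝ}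

lemma exp_neg_integral_mul_integral_eq_decayIntegral (hf : ContinuousOn f (Icc s 1))
    (hs : 0 < s) (hs1 : s ≤ 1) :
    exp (-∫ τ in s..1, f τ / τ) * ∫ t in s..1, 1 / t * exp (∫ τ in t..1, f τ / τ) =
      decayIntegral f s := by
  rw [decayIntegral, ← intervalIntegral.integral_const_mul]
  refine integral_congr fun t ht => ?_
  rw [uIcc_of_le hs1] at ht
  have hsplit := integral_add_adjacent_intervals
    (intervalIntegrable_div_self (hf.mono (Icc_subset_Icc_right ht.2)) hs ht.1)
    (intervalIntegrable_div_self (hf.mono (Icc_subset_Icc_left ht.1)) (hs.trans_le ht.1) ht.2)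
  rw [← hsplit, neg_add, exp_add, exp_neg (∫ τ in t..1, f τ / τ)]
  field_simp

lemma div_sub_rpow_le_decayIntegral (hf : ContinuousOn f (Icc s 1)) (hs : 0 < s) (hsδ : s ≤ δ)
    (hδ1 : δ ≤ 1) (hc : c ≠ 0) (hfc : ∀ τ ∈ Icc s δ, f τ ≤ c) :
    (1 - (s / δ) ^ c) / c ≤ decayIntegral f s := by
  have hnonneg :
      0 ≤ᵐ[volume.restrict (Ioc s 1)] fun t => 1 / t * exp (-∫ τ in s..t, f τ / τ) :=
    ae_restrict_of_forall_mem measurableSet_Ioc fun t ht =>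
      mul_nonneg (one_div_nonneg.2 (hs.trans ht.1).le) (exp_nonneg _)
  calc (1 - (s / δ) ^ c) / c = ((s / s) ^ c - (s / δ) ^ c) / c := by
        rw [div_self hs.ne', one_rpow]
    _ ≤ ∫ t in s..δ, 1 / t * exp (-∫ τ in s..t, f τ / τ) :=
      le_integral_one_div_mul_exp_neg_integral (hf.mono (Icc_subset_Icc_right hδ1)) hs le_rfl
        hsδ hc hfc
    _ ≤ decayIntegral f s := integral_mono_interval le_rfl hsδ hδ1 hnonneg
      (intervalIntegrable_one_div_mul_exp_neg_integral hf hs le_rfl (hsδ.trans hδ1))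

lemma decayIntegral_le (hf : ContinuousOn f (Icc s 1)) (hs : 0 < s) (hsδ : s ≤ δ) (hδ1 : δ ≤ 1)
    (hc : 0 < c) (hk : 0 < k) (hfc : ∀ τ ∈ Icc s δ, c ≤ f τ) (hfk : ∀ τ ∈ Icc s 1, k ≤ f τ) :
    decayIntegral f s ≤ 1 / c + (s / δ) ^ k / k := by
  have hfδ : ContinuousOn f (Icc s δ) := hf.mono (Icc_subset_Icc_right hδ1)
  have hnear := integral_one_div_mul_exp_neg_integral_le hfδ hs le_rfl hsδ hc.ne' hfc
  have htail := integral_one_div_mul_exp_neg_integral_le hf hs hsδ hδ1 hk.ne' hfk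
  rw [div_self hs.ne', one_rpow] at hnear
  rw [div_one] at htail
  rw [decayIntegral, ← integral_add_adjacent_intervals
    (intervalIntegrable_one_div_mul_exp_neg_integral hfδ hs le_rfl hsδ)
    (intervalIntegrable_one_div_mul_exp_neg_integral hf hs hsδ hδ1)]
  have h1 : (1 - (s / δ) ^ c) / c ≤ 1 / c := by
    gcongr; linarith [rpow_nonneg (div_nonneg hs.le (hs.le.trans hsδ)) c]
  have h2 : ((s / δ) ^ k - s ^ k) / k ≤ (s / δ) ^ k / k := by
    gcongr; linarith [rpow_nonneg hs.le k]
  linarith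

end Bounds
lemma exists_Ioc_forall_of_eventually_nhdsGT {α : Type*} [LinearOrder α] [TopologicalSpace α]
    [OrderTopology α] [NoMaxOrder α] [DenselyOrdered α] {p : α → Prop} {a b : α} (hab : a < b)
    (hp : ∀ᶠ x in 𝓝[>] a, p x) : ∃ δ ∈ Ioc a b, ∀ x ∈ Ioc a δ, p x := by
  obtain ⟨δ, hδ, hsub⟩ := mem_nhdsGT_iff_exists_Ioc_subset.1 (hp.and (Ioc_mem_nhdsGT hab))
  exact ⟨δ, ⟨hδ, (hsub ⟨hδ, le_rfl⟩).2.2⟩, fun x hx => (hsub hx).1⟩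

lemma tendsto_div_const_rpow_nhds_zero {c : ℝ} (δ : ℝ) (hc : 0 < c) :
    Tendsto (fun s => (s / δ) ^ c) (𝓝 0) (𝓝 0) := by
  simpa [zero_rpow hc.ne'] using
    ((continuous_id.div_const δ).rpow_const fun _ => Or.inr hc.le).tendsto 0

theorem tendsto_decayIntegral_nhdsGT_zero {f : ℝ → ℝ} {k L : ℝ} (hf : ContinuousOn f (Ioc 0 1))
    (hk : 0 < k) (hfk : ∀ τ ∈ Ioc 0 1, k ≤ f τ) (hL : 0 < L)
    (hlim : Tendsto f (𝓝[>] 0) (𝓝 L)) :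
    Tendsto (decayIntegral f) (𝓝[>] 0) (𝓝 (1 / L)) := by
  have hinv : Tendsto (fun c => 1 / c) (𝓝 L) (𝓝 (1 / L)) :=
    tendsto_const_nhds.div tendsto_id hL.ne'
  have hsub {s : ℝ} (hs : 0 < s) : Icc s 1 ⊆ Ioc 0 1 := Icc_subset_Ioc_left hs
  rw [tendsto_order]
  refine ⟨fun b hb => ?_, fun b hb => ?_⟩
  · obtain ⟨c, hbc, hLc⟩ := (((hinv.mono_left nhdsWithin_le_nhds).eventually (lt_mem_nhds hb)).and
      (eventually_mem_nhdsWithin (s := Ioi L))).exists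
    obtain ⟨δ, ⟨hδ, hδ1⟩, hfδ⟩ :=
      exists_Ioc_forall_of_eventually_nhdsGT one_pos (hlim.eventually (gt_mem_nhds hLc))
    have hlower : Tendsto (fun s => (1 - (s / δ) ^ c) / c) (𝓝[>] 0) (𝓝 (1 / c)) := by
      simpa using (((tendsto_div_const_rpow_nhds_zero δ (hL.trans hLc)).const_sub 1).div_const
        c).mono_left nhdsWithin_le_nhds
    filter_upwards [hlower.eventually (lt_mem_nhds hbc), Ioc_mem_nhdsGT hδ] with s hbs hs
    exact hbs.trans_le (div_sub_rpow_le_decayIntegral (hf.mono (hsub hs.1)) hs.1 hs.2 hδ1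
      (hL.trans hLc).ne' fun τ hτ => (hfδ τ ⟨hs.1.trans_le hτ.1, hτ.2⟩).le)
  · obtain ⟨c, hcb, hcL, hc⟩ :=
      (((hinv.mono_left nhdsWithin_le_nhds).eventually (gt_mem_nhds hb)).and
      ((eventually_mem_nhdsWithin (s := Iio L)).and
        ((lt_mem_nhds hL).filter_mono nhdsWithin_le_nhds))).exists
    obtain ⟨δ, ⟨hδ, hδ1⟩, hfδ⟩ :=
      exists_Ioc_forall_of_eventually_nhdsGT one_pos (hlim.eventually (lt_mem_nhds hcL))
    have hupper : Tendsto (fun s => 1 / c + (s / δ) ^ k / k) (𝓝[>] 0) (𝓝 (1 / c)) := by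
      simpa using (tendsto_const_nhds.add ((tendsto_div_const_rpow_nhds_zero δ hk).div_const
        k)).mono_left nhdsWithin_le_nhds
    filter_upwards [hupper.eventually (gt_mem_nhds hcb), Ioc_mem_nhdsGT hδ] with s hbs hs
    exact (decayIntegral_le (hf.mono (hsub hs.1)) hs.1 hs.2 hδ1 hc hk
      (fun τ hτ => (hfδ τ ⟨hs.1.trans_le hτ.1, hτ.2⟩).le)
      fun τ hτ => hfk τ (hsub hs.1 hτ)).trans_lt hbs

theorem example_zeta_P_general
    (ζ : ℝ → ℝ) (k₁ k₂ L : ℝ) (hk₁ : 0 < k₁)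
    (hζcont : ContinuousOn ζ (Ioc 0 1))
    (hζbd : ∀ s ∈ Ioc (0 : ℝ) 1, k₁ ≤ ζ s ∧ ζ s ≤ k₂)
    (hζlim : Tendsto ζ (nhdsWithin 0 (Ioc (0 : ℝ) 1)) (nhds L))
    (P I : ℝ → ℝ)
    (hP : ∀ s ∈ Ioc (0 : ℝ) 1, P s = Real.exp (-(∫ τ in s..1, ζ τ / τ)))
    (hI : ∀ s ∈ Ioc (0 : ℝ) 1,
      I s = ∫ t in s..1, (1 / t) * Real.exp (∫ τ in t..1, ζ τ / τ)) :
    Tendsto (fun s => P s * I s) (nhdsWithin 0 (Ioc (0 : ℝ) 1)) (nhds (1 / L)) ∧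
      ∀ᶠ s in nhdsWithin 0 (Ioc (0 : ℝ) 1), P s * I s ≤ 1 / k₁ + 1 := by
  rw [nhdsWithin_Ioc_eq_nhdsGT one_pos] at hζlim ⊢
  have hk₁ζ : ∀ τ ∈ Ioc (0 : ℝ) 1, k₁ ≤ ζ τ := fun τ hτ => (hζbd τ hτ).1
  have hk₁L : k₁ ≤ L := ge_of_tendsto hζlim (eventually_of_mem (Ioc_mem_nhdsGT one_pos) hk₁ζ)
  have hPI : decayIntegral ζ =ᶠ[𝓝[>] 0] fun s => P s * I s := by
    filter_upwards [Ioc_mem_nhdsGT one_pos] with s hs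
    rw [hP s hs, hI s hs, exp_neg_integral_mul_integral_eq_decayIntegral
      (hζcont.mono (Icc_subset_Ioc_left hs.1)) hs.1 hs.2]
  have hlim := (tendsto_decayIntegral_nhdsGT_zero hζcont hk₁ hk₁ζ (hk₁.trans_le hk₁L) hζlim).congr'
    hPI
  refine ⟨hlim, hlim.eventually (ge_mem_nhds ?_)⟩
  exact (one_div_le_one_div_of_le hk₁ hk₁L).trans_lt (lt_add_one _)

/-- For `P(s) = exp(−∫ₛ¹ ζ(τ)/τ dτ)` and `I(s) = ∫ₛ¹ (1/t) exp(∫ₜ¹ ζ(τ)/τ dτ) dt`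
with `0 < k₁ ≤ ζ ≤ k₂` continuous on `(0,1]`: if `ζ(s) → L > 0` as `s → 0⁺`,
then `P(s) I(s) → 1/L`; in particular `P·I` is eventually bounded above near `0`
by a constant depending only on `k₁`. -/
theorem example_zeta_P
    (ζ : ℝ → ℝ) (k₁ k₂ L : ℝ) (hk₁ : 0 < k₁)
    (hζcont : ContinuousOn ζ (Ioc 0 1))
    (hζbd : ∀ s ∈ Ioc (0 : ℝ) 1, k₁ ≤ ζ s ∧ ζ s ≤ k₂)
    (hL : 0 < L)
    (hζlim : Tendsto ζ (nhdsWithin 0 (Ioc (0 : ℝ) 1)) (nhds L))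
    (P I : ℝ → ℝ)
    (hP : ∀ s ∈ Ioc (0 : ℝ) 1, P s = Real.exp (-(∫ τ in s..1, ζ τ / τ)))
    (hI : ∀ s ∈ Ioc (0 : ℝ) 1,
      I s = ∫ t in s..1, (1 / t) * Real.exp (∫ τ in t..1, ζ τ / τ)) :
    Tendsto (fun s => P s * I s) (nhdsWithin 0 (Ioc (0 : ℝ) 1)) (nhds (1 / L)) ∧
      ∀ᶠ s in nhdsWithin 0 (Ioc (0 : ℝ) 1), P s * I s ≤ 1 / k₁ + 1 :=
  example_zeta_P_general ζ k₁ k₂ L hk₁ hζcont hζbd hζlim P I hP hI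
end
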